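/- arXiv:2601.07517 — 2 statements merged into one kernel-verified Lean document; each statement's English description precedes it below -/
import Mathlib

section
/- Let C ⊂ X be a set such that C̃ = cl conv(C + K) is pseudo-hyperbolic, and let A, B ⊂ X be nonempty. Then A + C ⊂ cl conv(B + C̃) if and only if A ⊂ cl conv(B + rec C̃). -/
open Pointwise

/-- The recession cone of a set `C`. -/
def recessionCone {X : Type*} [NormedAddCommGroup X] [NormedSpace ℝ X] (C : Set X) : Set X :=
  {u : X | ∀ c ∈ C, ∀ t : ℝ, 0 ≤ t → c + t • u ∈ C}

/-- The barrier cone of a set `C`. -/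
def barrierCone {X : Type*} [NormedAddCommGroup X] [NormedSpace ℝ X] (C : Set X) :
    Set (X →L[ℝ] ℝ) :=
  {f : X →L[ℝ] ℝ | BddAbove (f '' C)}

/-- `C` is pseudo-hyperbolic if `bar C = (rec C)⁻`. -/
def IsPseudoHyperbolic {X : Type*} [NormedAddCommGroup X] [NormedSpace ℝ X] (C : Set X) : Prop :=
  barrierCone C = {f : X →L[ℝ] ℝ | ∀ u ∈ recessionCone C, f u ≤ 0}

open Set

/-!
Write `C̃ = cl conv (C + K)`. Translating by `c ∈ C̃` maps `B + rec C̃` into `B + C̃`, which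
gives the easy direction. Conversely, if `a ∉ cl conv (B + rec C̃)`, separate it by `f < u` on
`B + rec C̃` and `u < f a`; as `rec C̃` is a cone, `f ≤ 0` on it. Pseudo-hyperbolicity makes `f`
bounded above on `C̃`, so `s = sup_C f` is finite, and `f ≤ s` on `C̃` because `K ⊆ rec C̃`.
Hence `f a + f c ≤ u + s` for every `c ∈ C`, and taking the supremum over `c` the finite `s`
cancels, leaving `f a ≤ u`.
-/

section

variable {X : Type*} [NormedAddCommGroup X] [NormedSpace ℝ X]

theorem zero_mem_recessionCone (C : Set X) : (0 : X) ∈ recessionCone C :=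
  fun c hc _ _ => by simpa using hc

theorem smul_mem_recessionCone {C : Set X} {v : X} (hv : v ∈ recessionCone C) {t : ℝ}
    (ht : 0 ≤ t) : t • v ∈ recessionCone C :=
  fun c hc s hs => by simpa [mul_smul] using hv c hc (s * t) (mul_nonneg hs ht)

theorem add_mem_of_mem_recessionCone {C : Set X} {c v : X} (hc : c ∈ C)
    (hv : v ∈ recessionCone C) : c + v ∈ C := by
  simpa using hv c hc 1 zero_le_one

theorem subset_closure_convexHull_add (C : Set X) {K : Set X} (hK0 : (0 : X) ∈ K) :
    C ⊆ closure (convexHull ℝ (C + K)) :=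
  fun c hc => subset_closure (subset_convexHull ℝ _ ⟨c, hc, 0, hK0, add_zero c⟩)

theorem add_mem_of_mem_closure_convexHull {S T : Set X} {v : X} (hT : Convex ℝ T)
    (hTc : IsClosed T) (h : ∀ s ∈ S, s + v ∈ T) {x : X} (hx : x ∈ closure (convexHull ℝ S)) :
    x + v ∈ T :=
  closure_minimal (convexHull_min h (hT.translate_preimage_left v))
    (hTc.preimage (continuous_add_const v)) hx

theorem map_le_of_mem_closure_convexHull (f : X →L[ℝ] ℝ) {S : Set X} {r : ℝ}
    (h : ∀ s ∈ S, f s ≤ r) {x : X} (hx : x ∈ closure (convexHull ℝ S)) : f x ≤ r :=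
  closure_minimal (convexHull_min h (convex_halfSpace_le f.isLinear r))
    (isClosed_le f.continuous continuous_const) hx

theorem Convex.add_mem_of_smul_mem {K : Set X} (hK : Convex ℝ K)
    (hKcone : ∀ t : ℝ, 0 ≤ t → ∀ y ∈ K, t • y ∈ K) {x y : X} (hx : x ∈ K) (hy : y ∈ K) :
    x + y ∈ K := by
  have hmid := hK hx hy (by norm_num : (0 : ℝ) ≤ 1 / 2) (by norm_num : (0 : ℝ) ≤ 1 / 2)
    (by norm_num)
  simpa [smul_add, smul_smul] using hKcone 2 zero_le_two _ hmid

theorem subset_recessionCone_closure_convexHull_add (C : Set X) {K : Set X}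
    (hKconv : Convex ℝ K) (hKcone : ∀ t : ℝ, 0 ≤ t → ∀ y ∈ K, t • y ∈ K) :
    K ⊆ recessionCone (closure (convexHull ℝ (C + K))) := by
  intro k hk x hx t ht
  refine add_mem_of_mem_closure_convexHull (convex_convexHull ℝ _).closure isClosed_closure ?_ hx
  rintro _ ⟨c, hc, k', hk', rfl⟩
  exact subset_closure (subset_convexHull ℝ _
    ⟨c, hc, k' + t • k, hKconv.add_mem_of_smul_mem hKcone hk' (hKcone t ht k hk),
      (add_assoc c k' (t • k)).symm⟩)

theorem add_mem_closure_convexHull_add_of_mem_recessionCone {B D : Set X} {a c : X}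
    (hc : c ∈ D) (ha : a ∈ closure (convexHull ℝ (B + recessionCone D))) :
    a + c ∈ closure (convexHull ℝ (B + D)) := by
  refine add_mem_of_mem_closure_convexHull (convex_convexHull ℝ _).closure isClosed_closure ?_ ha
  rintro _ ⟨b, hb, v, hv, rfl⟩
  refine subset_closure (subset_convexHull ℝ _
    ⟨b, hb, c + v, add_mem_of_mem_recessionCone hc hv, ?_⟩)
  exact add_left_comm b c v |>.trans (add_comm c (b + v))

theorem nonpos_of_forall_add_mul_lt {a x u : ℝ} (h : ∀ t : ℝ, 0 ≤ t → a + t * x < u) :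
    x ≤ 0 := by
  by_contra! hx
  have hau : a < u := by simpa using h 0 le_rfl
  have := h ((u - a) / x) (div_nonneg (sub_nonneg.2 hau.le) hx.le)
  rw [div_mul_cancel₀ _ hx.ne'] at this
  linarith

theorem mem_closure_convexHull_add_recessionCone_of_forall_add_mem {K C B : Set X}
    (hKconv : Convex ℝ K) (hK0 : (0 : X) ∈ K) (hKcone : ∀ t : ℝ, 0 ≤ t → ∀ y ∈ K, t • y ∈ K)
    (hC : C.Nonempty) (hph : IsPseudoHyperbolic (closure (convexHull ℝ (C + K))))
    (hB : B.Nonempty) {a : X}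
    (h : ∀ c ∈ C, a + c ∈ closure (convexHull ℝ (B + closure (convexHull ℝ (C + K))))) :
    a ∈ closure (convexHull ℝ (B + recessionCone (closure (convexHull ℝ (C + K))))) := by
  set Ct := closure (convexHull ℝ (C + K))
  by_contra ha
  obtain ⟨f, u, hfu, hua⟩ :=
    geometric_hahn_banach_closed_point (convex_convexHull ℝ _).closure isClosed_closure ha
  have hfBR : ∀ b ∈ B, ∀ v ∈ recessionCone Ct, f (b + v) < u := fun b hb v hv =>
    hfu _ (subset_closure (subset_convexHull ℝ _ (add_mem_add hb hv)))
  have hfB : ∀ b ∈ B, f b < u := fun b hb => by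
    simpa using hfBR b hb 0 (zero_mem_recessionCone Ct)
  obtain ⟨b, hb⟩ := hB
  have hfR : ∀ v ∈ recessionCone Ct, f v ≤ 0 := fun v hv =>
    nonpos_of_forall_add_mul_lt fun t ht => by
      simpa using hfBR b hb _ (smul_mem_recessionCone hv ht)
  have hbdd : BddAbove (f '' C) := by
    have hbar : f ∈ barrierCone Ct := hph ▸ hfR
    exact hbar.mono (image_mono (subset_closure_convexHull_add C hK0))
  set s := sSup (f '' C)
  have hfCt : ∀ x ∈ Ct, f x ≤ s := fun x => map_le_of_mem_closure_convexHull f <| by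
    rintro _ ⟨c, hc, k, hk, rfl⟩
    have := hfR k (subset_recessionCone_closure_convexHull_add C hKconv hKcone hk)
    have := le_csSup hbdd (mem_image_of_mem f hc)
    simp only [map_add]
    linarith
  have hfBCt : ∀ x ∈ closure (convexHull ℝ (B + Ct)), f x ≤ u + s :=
    fun x => map_le_of_mem_closure_convexHull f <| by
      rintro _ ⟨b, hb, x, hx, rfl⟩
      simpa using add_le_add (hfB b hb).le (hfCt x hx)
  have hs : s ≤ u + s - f a := csSup_le (hC.image f) <| forall_mem_image.2 fun c hc => by
    have := hfBCt _ (h c hc)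
    simp only [map_add] at this
    linarith
  linarith

end

theorem cancellation_pseudoHyperbolic_iff_general
    {X : Type*} [NormedAddCommGroup X] [NormedSpace ℝ X]
    (K : Set X) (hKconv : Convex ℝ K)
    (hK0 : (0 : X) ∈ K)
    (hKcone : ∀ t : ℝ, 0 ≤ t → ∀ y ∈ K, t • y ∈ K)
    (C : Set X) (hC : C.Nonempty)
    (hph : IsPseudoHyperbolic (closure (convexHull ℝ (C + K))))
    (A B : Set X) (hB : B.Nonempty) :
    (A + C ⊆ closure (convexHull ℝ (B + closure (convexHull ℝ (C + K))))) ↔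
    (A ⊆ closure (convexHull ℝ (B + recessionCone (closure (convexHull ℝ (C + K)))))) := by
  constructor
  · intro h a ha
    exact mem_closure_convexHull_add_recessionCone_of_forall_add_mem hKconv hK0 hKcone hC hph hB
      fun c hc => h (add_mem_add ha hc)
  · rintro h _ ⟨a, ha, c, hc, rfl⟩
    exact add_mem_closure_convexHull_add_of_mem_recessionCone
      (subset_closure_convexHull_add C hK0 hc) (h ha)

/-- If `C̃ = cl conv (C + K)` is pseudo-hyperbolic, then
`A + C ⊆ cl conv (B + C̃)` iff `A ⊆ cl conv (B + rec C̃)`. -/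
theorem cancellation_pseudoHyperbolic_iff
    {X : Type*} [NormedAddCommGroup X] [NormedSpace ℝ X]
    (K : Set X) (hKcl : IsClosed K) (hKconv : Convex ℝ K)
    (hK0 : (0 : X) ∈ K)
    (hKcone : ∀ t : ℝ, 0 ≤ t → ∀ y ∈ K, t • y ∈ K)
    (C : Set X) (hC : C.Nonempty)
    (hph : IsPseudoHyperbolic (closure (convexHull ℝ (C + K))))
    (A B : Set X) (hA : A.Nonempty) (hB : B.Nonempty) :
    (A + C ⊆ closure (convexHull ℝ (B + closure (convexHull ℝ (C + K))))) ↔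
    (A ⊆ closure (convexHull ℝ (B + recessionCone (closure (convexHull ℝ (C + K)))))) :=
  cancellation_pseudoHyperbolic_iff_general K hKconv hK0 hKcone C hC hph A B hB
end

section
/- Let A, B, C, D ⊂ X be nonempty dually K-bounded sets with cl(Ã + D̃) = cl(B̃ + C̃) (i.e., ⟨Ã,B̃⟩ = ⟨C̃,D̃⟩ in the Rådström space). Then the Hausdorff–Pompeiu distances agree: h(Ã, B̃) = h(C̃, D̃) (with values in [0,∞]). -/
/-!
Write `M, N, P, Q` for `Ã, B̃, C̃, D̃`. If `δ > h(P, Q)` then `P ⊆ Q + B(0, δ)`, so for `m ∈ M`,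
`m + Q ⊆ cl (M + Q) = cl (N + P) ⊆ cl (N_δ + Q)`, where `N_δ` is the closed `δ`-neighbourhood
of `N`. As `N_δ` is closed, convex and invariant under translation by `K`, and `Q` is dually
`K`-bounded, Hahn–Banach separation cancels `Q`: `m ∈ N_δ`. Hence `e(M, N) ≤ h(P, Q)`, likewise
`e(N, M) ≤ h(P, Q)`, and exchanging the roles of the two pairs gives equality.
-/

open Pointwise Metric

theorem closure_add_subset_of_add_subset {X : Type*} [TopologicalSpace X] [Add X]
    [ContinuousAdd X] {W K : Set X} (hWK : W + K ⊆ W) : closure W + K ⊆ closure W := by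
  rintro _ ⟨x, hx, k, hk, rfl⟩
  exact map_mem_closure (f := (· + k)) (continuous_add_const k) hx
    fun w hw => hWK (Set.add_mem_add hw hk)

section VectorSpace

variable {X : Type*} [AddCommGroup X] [Module ℝ X] {K : Set X}

theorem Convex.add_self_subset_of_smul_mem (hKconv : Convex ℝ K)
    (hKcone : ∀ t : ℝ, 0 ≤ t → ∀ y ∈ K, t • y ∈ K) : K + K ⊆ K := by
  rintro _ ⟨x, hx, y, hy, rfl⟩
  have hmid : (2⁻¹ : ℝ) • x + (2⁻¹ : ℝ) • y ∈ K :=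
    hKconv hx hy (by norm_num) (by norm_num) (by norm_num)
  convert hKcone 2 zero_le_two _ hmid using 1
  rw [smul_add, smul_smul, smul_smul]
  norm_num

theorem convexHull_add_subset_of_add_subset {T : Set X} (hTK : T + K ⊆ T) :
    convexHull ℝ T + K ⊆ convexHull ℝ T :=
  calc convexHull ℝ T + K ⊆ convexHull ℝ T + convexHull ℝ K :=
        Set.add_subset_add_left (subset_convexHull ℝ K)
    _ = convexHull ℝ (T + K) := (convexHull_add T K).symm
    _ ⊆ convexHull ℝ T := convexHull_mono hTK

theorem LinearMap.nonneg_of_bddBelow_of_add_subset {W : Set X} (f : X →ₗ[ℝ] ℝ)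
    (hWne : W.Nonempty) (hWK : W + K ⊆ W) (hKcone : ∀ t : ℝ, 0 ≤ t → ∀ y ∈ K, t • y ∈ K)
    (hf : BddBelow (f '' W)) : ∀ k ∈ K, 0 ≤ f k := by
  intro k hk
  by_contra! hfk
  obtain ⟨w, hw⟩ := hWne
  obtain ⟨c, hc⟩ := hf
  have ht : 0 ≤ (f w - c + 1) / -f k := div_nonneg (by linarith [hc ⟨w, hw, rfl⟩]) (by linarith)
  have hmem : w + ((f w - c + 1) / -f k) • k ∈ W := hWK (Set.add_mem_add hw (hKcone _ ht k hk))
  have := hc ⟨_, hmem, rfl⟩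
  rw [map_add, map_smul, smul_eq_mul, div_mul_eq_mul_div, div_neg,
    mul_div_cancel_right₀ _ hfk.ne] at this
  linarith

end VectorSpace

section TopologicalVectorSpace

variable {X : Type*} [TopologicalSpace X] [AddCommGroup X] [Module ℝ X] {K : Set X}

def DuallyBounded (K S : Set X) : Prop :=
  ∀ f : X →L[ℝ] ℝ, (∀ k ∈ K, 0 ≤ f k) → BddBelow (f '' S)

theorem DuallyBounded.closure_convexHull_add {S : Set X} (hS : DuallyBounded K S) :
    DuallyBounded K (closure (convexHull ℝ (S + K))) := by
  intro f hfK
  obtain ⟨c, hc⟩ := hS f hfK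
  have hSK : S + K ⊆ {x | c ≤ f x} := by
    rintro _ ⟨s, hs, k, hk, rfl⟩
    simp only [Set.mem_ofPred_eq, map_add]
    linarith [hc ⟨s, hs, rfl⟩, hfK k hk]
  have hhull : closure (convexHull ℝ (S + K)) ⊆ {x | c ≤ f x} :=
    closure_minimal (convexHull_min hSK (convex_halfSpace_ge f.isLinear c))
      (isClosed_le continuous_const f.continuous)
  exact ⟨c, by rintro _ ⟨x, hx, rfl⟩; exact hhull hx⟩

/-- Rådström's cancellation law. A functional separating `m` from `W` is bounded below on the
`K`-invariant set `W`, hence lies in the dual cone `K⁺` and is bounded below on `Q`. -/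
theorem mem_of_forall_add_mem_closure_add [IsTopologicalAddGroup X] [ContinuousSMul ℝ X]
    [LocallyConvexSpace ℝ X] {W Q : Set X} {m : X} (hWcl : IsClosed W) (hWconv : Convex ℝ W)
    (hWK : W + K ⊆ W) (hKcone : ∀ t : ℝ, 0 ≤ t → ∀ y ∈ K, t • y ∈ K) (hQ : Q.Nonempty)
    (hQb : DuallyBounded K Q) (hm : ∀ q ∈ Q, m + q ∈ closure (W + Q)) : m ∈ W := by
  obtain ⟨q₀, hq₀⟩ := hQ
  have hWne : W.Nonempty := (closure_nonempty_iff.1 ⟨_, hm q₀ hq₀⟩).of_add_left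
  by_contra hmW
  obtain ⟨f, u, hfm, hfW⟩ := geometric_hahn_banach_point_closed hWconv hWcl hmW
  have hfK : ∀ k ∈ K, 0 ≤ f k :=
    LinearMap.nonneg_of_bddBelow_of_add_subset (f : X →ₗ[ℝ] ℝ) hWne hWK hKcone
      ⟨u, by rintro _ ⟨w, hw, rfl⟩; exact (hfW w hw).le⟩
  have hQbdd := hQb f hfK
  set α := sInf (f '' Q)
  have hcl : closure (W + Q) ⊆ {x | u + α ≤ f x} := by
    refine closure_minimal ?_ (isClosed_le continuous_const f.continuous)
    rintro _ ⟨w, hw, q, hq, rfl⟩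
    simp only [Set.mem_ofPred_eq, map_add]
    linarith [hfW w hw, csInf_le hQbdd ⟨q, hq, rfl⟩]
  -- each `f q` exceeds `α` by at least `u - f m > 0`, contradicting `α = inf f(Q)`
  have : α + (u - f m) ≤ α := by
    refine le_csInf ⟨_, q₀, hq₀, rfl⟩ ?_
    rintro _ ⟨q, hq, rfl⟩
    have := hcl (hm q hq)
    simp only [Set.mem_ofPred_eq, map_add] at this
    linarith
  linarith

end TopologicalVectorSpace

section SeminormedGroup

variable {X : Type*} [SeminormedAddCommGroup X] {K : Set X}

theorem infEDist_add_le_of_add_subset {N : Set X} {k : X} (hNK : N + K ⊆ N) (hk : k ∈ K)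
    (x : X) : infEDist (x + k) N ≤ infEDist x N :=
  le_infEDist.2 fun n hn =>
    (infEDist_le_edist_of_mem (hNK (Set.add_mem_add hn hk))).trans_eq (edist_add_right x n k)

theorem cthickening_add_subset_of_add_subset {N : Set X} (hNK : N + K ⊆ N) (δ : ℝ) :
    cthickening δ N + K ⊆ cthickening δ N := by
  rintro _ ⟨x, hx, k, hk, rfl⟩
  exact (infEDist_add_le_of_add_subset hNK hk x).trans hx

end SeminormedGroup

section SeminormedSpace

variable {X : Type*} [SeminormedAddCommGroup X] [NormedSpace ℝ X] {K : Set X}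

/-- For `δ > r`, cancel `Q` from `m + Q ⊆ cl (cthickening δ N + Q)`. -/
theorem infEDist_le_of_forall_add_mem_closure_add {N P Q : Set X} {m : X} {r : ENNReal}
    (hNconv : Convex ℝ N) (hNK : N + K ⊆ N) (hKcone : ∀ t : ℝ, 0 ≤ t → ∀ y ∈ K, t • y ∈ K)
    (hQ : Q.Nonempty) (hQb : DuallyBounded K Q) (hPQ : ∀ p ∈ P, infEDist p Q ≤ r)
    (hm : ∀ q ∈ Q, m + q ∈ closure (N + P)) : infEDist m N ≤ r := by
  refine le_of_forall_gt_imp_ge_of_dense fun δ hrδ => ?_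
  rcases eq_or_ne δ ⊤ with rfl | hδ
  · exact le_top
  have hP : P ⊆ Q + ball 0 δ.toReal := by
    intro p hp
    rw [add_ball_zero, mem_thickening_iff_infEDist_lt, ENNReal.ofReal_toReal hδ]
    exact (hPQ p hp).trans_lt hrδ
  have hNP : N + P ⊆ cthickening δ.toReal N + Q :=
    calc N + P ⊆ N + (Q + ball 0 δ.toReal) := Set.add_subset_add_left hP
      _ = (N + ball 0 δ.toReal) + Q := by rw [add_comm Q, add_assoc]
      _ ⊆ cthickening δ.toReal N + Q := by
        rw [add_ball_zero]
        exact Set.add_subset_add_right (thickening_subset_cthickening _ _)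
  rw [← ENNReal.ofReal_toReal hδ, ← mem_cthickening_iff]
  exact mem_of_forall_add_mem_closure_add isClosed_cthickening (hNconv.cthickening _)
    (cthickening_add_subset_of_add_subset hNK _) hKcone hQ hQb
    fun q hq => closure_mono hNP (hm q hq)


theorem hausdorffEDist_le_of_closure_add_eq {M N P Q : Set X}
    (hKcone : ∀ t : ℝ, 0 ≤ t → ∀ y ∈ K, t • y ∈ K)
    (hMconv : Convex ℝ M) (hMK : M + K ⊆ M) (hNconv : Convex ℝ N) (hNK : N + K ⊆ N)
    (hP : P.Nonempty) (hPb : DuallyBounded K P) (hQ : Q.Nonempty) (hQb : DuallyBounded K Q)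
    (hequiv : closure (M + Q) = closure (N + P)) :
    hausdorffEDist M N ≤ hausdorffEDist P Q := by
  refine hausdorffEDist_le_of_infEDist (fun m hm => ?_) (fun n hn => ?_)
  · refine infEDist_le_of_forall_add_mem_closure_add hNconv hNK hKcone hQ hQb
      (fun p hp => infEDist_le_hausdorffEDist_of_mem hp) fun q hq => ?_
    exact hequiv ▸ subset_closure (Set.add_mem_add hm hq)
  · refine infEDist_le_of_forall_add_mem_closure_add hMconv hMK hKcone hP hPb
      (fun q hq => hausdorffEDist_comm (s := P) ▸ infEDist_le_hausdorffEDist_of_mem hq)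
      fun p hp => ?_
    exact hequiv ▸ subset_closure (Set.add_mem_add hn hp)

end SeminormedSpace

theorem hausdorff_dist_well_defined_general
    {X : Type*} [NormedAddCommGroup X] [NormedSpace ℝ X]
    (K : Set X) (hKconv : Convex ℝ K)
    (hK0 : (0 : X) ∈ K)
    (hKcone : ∀ t : ℝ, 0 ≤ t → ∀ y ∈ K, t • y ∈ K)
    (A B C D : Set X)
    (hA : A.Nonempty) (hB : B.Nonempty) (hC : C.Nonempty) (hD : D.Nonempty)
    (hdbA : ∀ f : X →L[ℝ] ℝ, (∀ k ∈ K, 0 ≤ f k) → BddBelow (f '' A))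
    (hdbB : ∀ f : X →L[ℝ] ℝ, (∀ k ∈ K, 0 ≤ f k) → BddBelow (f '' B))
    (hdbC : ∀ f : X →L[ℝ] ℝ, (∀ k ∈ K, 0 ≤ f k) → BddBelow (f '' C))
    (hdbD : ∀ f : X →L[ℝ] ℝ, (∀ k ∈ K, 0 ≤ f k) → BddBelow (f '' D))
    (hequiv : closure (closure (convexHull ℝ (A + K)) + closure (convexHull ℝ (D + K))) =
      closure (closure (convexHull ℝ (B + K)) + closure (convexHull ℝ (C + K)))) :
    EMetric.hausdorffEdist (closure (convexHull ℝ (A + K))) (closure (convexHull ℝ (B + K))) =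
      EMetric.hausdorffEdist (closure (convexHull ℝ (C + K))) (closure (convexHull ℝ (D + K))) := by
  have hKK : K + K ⊆ K := hKconv.add_self_subset_of_smul_mem hKcone
  have hconv (S : Set X) : Convex ℝ (closure (convexHull ℝ (S + K))) :=
    (convex_convexHull ℝ _).closure
  have hinv (S : Set X) : closure (convexHull ℝ (S + K)) + K ⊆ closure (convexHull ℝ (S + K)) :=
    closure_add_subset_of_add_subset <| convexHull_add_subset_of_add_subset <|
      (add_assoc S K K).symm ▸ Set.add_subset_add_left hKK
  have hne {S : Set X} (hS : S.Nonempty) : (closure (convexHull ℝ (S + K))).Nonempty :=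
    (hS.add ⟨0, hK0⟩).convexHull.closure
  refine le_antisymm ?_ ?_
  · exact hausdorffEDist_le_of_closure_add_eq hKcone (hconv A) (hinv A) (hconv B) (hinv B)
      (hne hC) (DuallyBounded.closure_convexHull_add hdbC)
      (hne hD) (DuallyBounded.closure_convexHull_add hdbD) hequiv
  · refine hausdorffEDist_le_of_closure_add_eq hKcone (hconv C) (hinv C) (hconv D) (hinv D)
      (hne hA) (DuallyBounded.closure_convexHull_add hdbA)
      (hne hB) (DuallyBounded.closure_convexHull_add hdbB) ?_
    rw [add_comm, ← hequiv, add_comm]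

/-- The Hausdorff–Pompeiu (extended) distance is well defined on the Rådström space
of dually K-bounded sets: equivalent pairs have equal Hausdorff distances. -/
theorem hausdorff_dist_well_defined
    {X : Type*} [NormedAddCommGroup X] [NormedSpace ℝ X]
    (K : Set X) (hKcl : IsClosed K) (hKconv : Convex ℝ K)
    (hK0 : (0 : X) ∈ K)
    (hKcone : ∀ t : ℝ, 0 ≤ t → ∀ y ∈ K, t • y ∈ K)
    (A B C D : Set X)
    (hA : A.Nonempty) (hB : B.Nonempty) (hC : C.Nonempty) (hD : D.Nonempty)
    (hdbA : ∀ f : X →L[ℝ] ℝ, (∀ k ∈ K, 0 ≤ f k) → BddBelow (f '' A))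
    (hdbB : ∀ f : X →L[ℝ] ℝ, (∀ k ∈ K, 0 ≤ f k) → BddBelow (f '' B))
    (hdbC : ∀ f : X →L[ℝ] ℝ, (∀ k ∈ K, 0 ≤ f k) → BddBelow (f '' C))
    (hdbD : ∀ f : X →L[ℝ] ℝ, (∀ k ∈ K, 0 ≤ f k) → BddBelow (f '' D))
    (hequiv : closure (closure (convexHull ℝ (A + K)) + closure (convexHull ℝ (D + K))) =
      closure (closure (convexHull ℝ (B + K)) + closure (convexHull ℝ (C + K)))) :
    EMetric.hausdorffEdist (closure (convexHull ℝ (A + K))) (closure (convexHull ℝ (B + K))) =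
      EMetric.hausdorffEdist (closure (convexHull ℝ (C + K))) (closure (convexHull ℝ (D + K))) :=
  hausdorff_dist_well_defined_general K hKconv hK0 hKcone A B C D hA hB hC hD hdbA hdbB hdbC hdbD
    hequiv
end
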